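/- arXiv:2105.12579 — 3 statements merged into one kernel-verified Lean document; each statement's English description precedes it below -/
import Mathlib

section
/- Let H be an N×N Hermitian complex matrix, S a subset of its index set with complement S̄, and T a normal, invertible |S|×|S| complex matrix. If T commutes with the block ((H^k))_{SS} for every natural number k, then there exists a normal N×N complex matrix Q such that Q_{SS} = T, Q_{SS̄} = 0, Q_{S̄S} = 0, and Q commutes with H (i.e. QH = HQ). -/
/-!
Let `E : ℂ^S → ℂ^N` be the inclusion and `K` the Krylov space spanned by the vectors `H^k E x`.
Since `T` commutes with the compressions `E† H^m E`, which are self-adjoint, so does `T†`, and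
`⟪H^j E T x, H^k E y⟫ = ⟪H^j E x, H^k E T† y⟫`. Hence a linear relation among the generators
`H^k E x` survives replacing each `x` by `T x`: the resulting vector lies in `K` and is orthogonal
to `K`. So `H^k E x ↦ H^k E T x` is well defined on `K`; `Q` is this map on `K` and the identity
on `Kᗮ`. The same identity shows that the lift of `T†` built this way is `Q†`. `Q` commutes with
`H` on `K` by shifting `k`, and on the `H`-invariant `Kᗮ` trivially; `Q` is normal since `T` is.
-/

open Matrix

theorem LinearMap.exists_comp_eq_of_ker_le {K M V V' : Type*} [DivisionRing K]
    [AddCommGroup M] [AddCommGroup V] [AddCommGroup V'] [Module K M] [Module K V] [Module K V']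
    (f : M →ₗ[K] V) (g : M →ₗ[K] V') (hfg : LinearMap.ker f ≤ LinearMap.ker g) :
    ∃ φ : V →ₗ[K] V', φ ∘ₗ f = g := by
  obtain ⟨φ, hφ⟩ := LinearMap.exists_extend ((LinearMap.ker f).liftQ g hfg ∘ₗ
    f.quotKerEquivRange.symm.toLinearMap)
  refine ⟨φ, LinearMap.ext fun x => ?_⟩
  simpa [LinearMap.quotKerEquivRange_symm_apply_image] using
    LinearMap.congr_fun hφ ⟨f x, LinearMap.mem_range_self f x⟩

section KrylovMap

variable {R V W : Type*} [CommSemiring R] [AddCommMonoid V] [AddCommMonoid W]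
  [Module R V] [Module R W]

noncomputable def krylovMap (h : Module.End R V) (e : W →ₗ[R] V) : (ℕ →₀ W) →ₗ[R] V :=
  Finsupp.lsum R fun k => (h ^ k) ∘ₗ e

variable (h : Module.End R V) (e : W →ₗ[R] V)

@[simp]
theorem krylovMap_single (k : ℕ) (w : W) :
    krylovMap h e (Finsupp.single k w) = (h ^ k) (e w) := by
  simp [krylovMap]

theorem krylovMap_comp_lsingle_zero : krylovMap h e ∘ₗ Finsupp.lsingle 0 = e := by
  ext w; simp

theorem krylovMap_mapDomain_succ (a : ℕ →₀ W) :
    krylovMap h e (Finsupp.mapDomain Nat.succ a) = h (krylovMap h e a) := by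
  induction a using Finsupp.induction_linear with
  | zero => simp
  | add a b ha hb => simp [Finsupp.mapDomain_add, ha, hb]
  | single k w => simp [pow_succ']

end KrylovMap

section InnerProductSpace

open LinearMap (adjoint)
open scoped InnerProductSpace

variable {𝕜 V W : Type*} [RCLike 𝕜] [NormedAddCommGroup V] [InnerProductSpace 𝕜 V]
  [NormedAddCommGroup W] [InnerProductSpace 𝕜 W]

theorem LinearMap.ext_of_orthogonal {V' : Type*} [AddCommGroup V'] [Module 𝕜 V']
    (K : Submodule 𝕜 V) [K.HasOrthogonalProjection] {f g : V →ₗ[𝕜] V'}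
    (hK : ∀ x ∈ K, f x = g x) (hKperp : ∀ y ∈ Kᗮ, f y = g y) : f = g := by
  ext v
  obtain ⟨x, hx, y, hy, rfl⟩ := K.exists_add_mem_mem_orthogonal v
  rw [map_add, map_add, hK x hx, hKperp y hy]

theorem Submodule.inner_add_add_of_mem_orthogonal (K : Submodule 𝕜 V) {u u' v v' : V}
    (hu : u ∈ K) (hu' : u' ∈ K) (hv : v ∈ Kᗮ) (hv' : v' ∈ Kᗮ) :
    ⟪u + v, u' + v'⟫_𝕜 = ⟪u, u'⟫_𝕜 + ⟪v, v'⟫_𝕜 := by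
  simp [inner_add_left, inner_add_right, K.inner_right_of_mem_orthogonal hu hv',
    K.inner_left_of_mem_orthogonal hu' hv]

variable (h : Module.End 𝕜 V) (e : W →ₗ[𝕜] V) in
structure IsKrylovLift (t : Module.End 𝕜 W) (Q : Module.End 𝕜 V) : Prop where
  comp_krylovMap : Q ∘ₗ krylovMap h e = krylovMap h e ∘ₗ Finsupp.mapRange.linearMap t
  apply_of_mem_orthogonal : ∀ y ∈ (LinearMap.range (krylovMap h e))ᗮ, Q y = y

variable {h : Module.End 𝕜 V} {e : W →ₗ[𝕜] V} {t t' : Module.End 𝕜 W} {Q Q' : Module.End 𝕜 V}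

theorem IsKrylovLift.apply_krylovMap (hQ : IsKrylovLift h e t Q) (a : ℕ →₀ W) :
    Q (krylovMap h e a) = krylovMap h e (Finsupp.mapRange.linearMap t a) :=
  LinearMap.congr_fun hQ.comp_krylovMap a

theorem IsKrylovLift.comp_eq (hQ : IsKrylovLift h e t Q) : Q ∘ₗ e = e ∘ₗ t := by
  rw [← krylovMap_comp_lsingle_zero h e, ← LinearMap.comp_assoc, hQ.comp_krylovMap]
  ext w; simp

variable [FiniteDimensional 𝕜 V]

variable (h e) in
theorem LinearMap.ext_of_comp_krylovMap {f g : Module.End 𝕜 V}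
    (hK : f ∘ₗ krylovMap h e = g ∘ₗ krylovMap h e)
    (hKperp : ∀ y ∈ (LinearMap.range (krylovMap h e))ᗮ, f y = g y) : f = g := by
  refine LinearMap.ext_of_orthogonal _ (fun x hx => ?_) hKperp
  obtain ⟨a, rfl⟩ := LinearMap.mem_range.mp hx
  exact LinearMap.congr_fun hK a

theorem IsKrylovLift.commute (hh : h.IsSymmetric) (hQ : IsKrylovLift h e t Q) : Commute Q h := by
  have hperp : ∀ y ∈ (LinearMap.range (krylovMap h e))ᗮ,
      h y ∈ (LinearMap.range (krylovMap h e))ᗮ := by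
    intro y hy x hx
    obtain ⟨a, rfl⟩ := LinearMap.mem_range.mp hx
    rw [← hh, ← krylovMap_mapDomain_succ]
    exact hy _ (LinearMap.mem_range_self _ _)
  refine LinearMap.ext_of_comp_krylovMap h e (LinearMap.ext fun a => ?_) fun y hy => ?_
  · calc Q (h (krylovMap h e a))
        = krylovMap h e (Finsupp.mapRange.linearMap t (Finsupp.mapDomain Nat.succ a)) := by
          rw [← krylovMap_mapDomain_succ, hQ.apply_krylovMap]
      _ = h (Q (krylovMap h e a)) := by
          rw [hQ.apply_krylovMap, ← krylovMap_mapDomain_succ, Finsupp.mapRange.linearMap_apply,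
            Finsupp.mapRange.linearMap_apply, Finsupp.mapDomain_mapRange _ _ _ _ (map_add t)]
  · rw [Module.End.mul_apply, Module.End.mul_apply, hQ.apply_of_mem_orthogonal _ (hperp y hy),
      hQ.apply_of_mem_orthogonal y hy]

theorem IsKrylovLift.commute_of_commute (hQ : IsKrylovLift h e t Q) (hQ' : IsKrylovLift h e t' Q')
    (htt' : Commute t t') : Commute Q Q' := by
  refine LinearMap.ext_of_comp_krylovMap h e (LinearMap.ext fun a => ?_) fun y hy => ?_
  · simp only [LinearMap.comp_apply, Module.End.mul_apply, hQ.apply_krylovMap,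
      hQ'.apply_krylovMap]
    congr 1
    simpa [Module.End.mul_eq_comp, Finsupp.mapRange.linearMap_comp] using
      LinearMap.congr_fun (congrArg (Finsupp.mapRange.linearMap (α := ℕ)) htt'.eq) a
  · rw [Module.End.mul_apply, Module.End.mul_apply, hQ'.apply_of_mem_orthogonal y hy,
      hQ.apply_of_mem_orthogonal y hy, hQ'.apply_of_mem_orthogonal y hy]

variable [FiniteDimensional 𝕜 W]

theorem LinearMap.IsSymmetric.adjoint_comp_comp (hh : h.IsSymmetric) (e : W →ₗ[𝕜] V) :
    (adjoint e ∘ₗ h ∘ₗ e).IsSymmetric := fun x y => by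
  simp only [LinearMap.comp_apply, LinearMap.adjoint_inner_left, LinearMap.adjoint_inner_right]
  exact hh _ _

theorem inner_pow_apply_map_eq_adjoint (hh : h.IsSymmetric)
    (ht : ∀ k, Commute t (adjoint e ∘ₗ (h ^ k) ∘ₗ e)) (j k : ℕ) (w w' : W) :
    ⟪(h ^ j) (e (t w)), (h ^ k) (e w')⟫_𝕜 = ⟪(h ^ j) (e w), (h ^ k) (e (adjoint t w'))⟫_𝕜 := by
  set C := adjoint e ∘ₗ (h ^ (j + k)) ∘ₗ e
  have hC : C.IsSymmetric := (hh.pow (j + k)).adjoint_comp_comp e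
  have hsplit : ∀ u u', ⟪(h ^ j) (e u), (h ^ k) (e u')⟫_𝕜 = ⟪u, C u'⟫_𝕜 := fun u u' => by
    rw [hh.pow j, ← Module.End.mul_apply, ← pow_add, ← LinearMap.adjoint_inner_right]; rfl
  calc ⟪(h ^ j) (e (t w)), (h ^ k) (e w')⟫_𝕜 = ⟪C (t w), w'⟫_𝕜 := by rw [hsplit, hC]
    _ = ⟪t (C w), w'⟫_𝕜 := by rw [← Module.End.mul_apply, ← (ht (j + k)).eq]; rfl
    _ = ⟪w, C (adjoint t w')⟫_𝕜 := by rw [← LinearMap.adjoint_inner_right, hC]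
    _ = ⟪(h ^ j) (e w), (h ^ k) (e (adjoint t w'))⟫_𝕜 := (hsplit _ _).symm

theorem inner_krylovMap_mapRange (hh : h.IsSymmetric)
    (ht : ∀ k, Commute t (adjoint e ∘ₗ (h ^ k) ∘ₗ e)) (a b : ℕ →₀ W) :
    ⟪krylovMap h e (Finsupp.mapRange.linearMap t a), krylovMap h e b⟫_𝕜 =
      ⟪krylovMap h e a, krylovMap h e (Finsupp.mapRange.linearMap (adjoint t) b)⟫_𝕜 := by
  induction a using Finsupp.induction_linear with
  | zero => simp
  | add a₁ a₂ h₁ h₂ => simp only [map_add, inner_add_left, h₁, h₂]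
  | single j w =>
    induction b using Finsupp.induction_linear with
    | zero => simp
    | add b₁ b₂ h₁ h₂ => simp only [map_add, inner_add_right, h₁, h₂]
    | single k w' => simpa using inner_pow_apply_map_eq_adjoint hh ht j k w w'

theorem ker_krylovMap_le (hh : h.IsSymmetric) (ht : ∀ k, Commute t (adjoint e ∘ₗ (h ^ k) ∘ₗ e)) :
    LinearMap.ker (krylovMap h e) ≤
      LinearMap.ker (krylovMap h e ∘ₗ Finsupp.mapRange.linearMap t) := by
  intro a ha
  rw [LinearMap.mem_ker] at ha ⊢
  rw [LinearMap.comp_apply, ← inner_self_eq_zero (𝕜 := 𝕜), inner_krylovMap_mapRange hh ht, ha,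
    inner_zero_left]

theorem exists_isKrylovLift (hh : h.IsSymmetric)
    (ht : ∀ k, Commute t (adjoint e ∘ₗ (h ^ k) ∘ₗ e)) : ∃ Q, IsKrylovLift h e t Q := by
  obtain ⟨φ, hφ⟩ := LinearMap.exists_comp_eq_of_ker_le _ _ (ker_krylovMap_le hh ht)
  set P : Module.End 𝕜 V := ((LinearMap.range (krylovMap h e)).starProjection : V →ₗ[𝕜] V)
  refine ⟨φ ∘ₗ P + (1 - P), ⟨LinearMap.ext fun a => ?_, fun y hy => ?_⟩⟩
  · have hPa : P (krylovMap h e a) = krylovMap h e a :=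
      Submodule.starProjection_eq_self_iff.mpr (LinearMap.mem_range_self _ a)
    simp [hPa, ← hφ]
  · have hPy : P y = 0 := (Submodule.starProjection_apply_eq_zero_iff _).mpr hy
    simp [hPy]

theorem IsKrylovLift.adjoint_eq (hh : h.IsSymmetric)
    (ht : ∀ k, Commute t (adjoint e ∘ₗ (h ^ k) ∘ₗ e))
    (hQ : IsKrylovLift h e t Q) (hQ' : IsKrylovLift h e (adjoint t) Q') : adjoint Q = Q' := by
  suffices Q = adjoint Q' by rw [this, LinearMap.adjoint_adjoint]
  refine (LinearMap.eq_adjoint_iff Q Q').mpr fun x y => ?_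
  set K := LinearMap.range (krylovMap h e)
  obtain ⟨_, ⟨a, rfl⟩, x', hx', rfl⟩ := K.exists_add_mem_mem_orthogonal x
  obtain ⟨_, ⟨b, rfl⟩, y', hy', rfl⟩ := K.exists_add_mem_mem_orthogonal y
  simp only [map_add, hQ.apply_krylovMap, hQ'.apply_krylovMap, hQ.apply_of_mem_orthogonal x' hx',
    hQ'.apply_of_mem_orthogonal y' hy']
  rw [K.inner_add_add_of_mem_orthogonal (LinearMap.mem_range_self _ _)
      (LinearMap.mem_range_self _ _) hx' hy',
    K.inner_add_add_of_mem_orthogonal (LinearMap.mem_range_self _ _)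
      (LinearMap.mem_range_self _ _) hx' hy',
    inner_krylovMap_mapRange hh ht]

theorem exists_normal_lift (hh : h.IsSymmetric)
    (ht : ∀ k, Commute t (adjoint e ∘ₗ (h ^ k) ∘ₗ e)) (htn : Commute t (adjoint t)) :
    ∃ Q : Module.End 𝕜 V, Commute Q h ∧ Q ∘ₗ e = e ∘ₗ t ∧
      adjoint Q ∘ₗ e = e ∘ₗ adjoint t ∧ Commute Q (adjoint Q) := by
  have ht' (k : ℕ) : Commute (adjoint t) (adjoint e ∘ₗ (h ^ k) ∘ₗ e) := by
    have hC := (LinearMap.isSymmetric_iff_isSelfAdjoint _).mp ((hh.pow k).adjoint_comp_comp e)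
    simpa [LinearMap.star_eq_adjoint, hC.star_eq] using (ht k).star_star
  obtain ⟨Q, hQ⟩ := exists_isKrylovLift hh ht
  obtain ⟨Q', hQ'⟩ := exists_isKrylovLift hh ht'
  have hadj := hQ.adjoint_eq hh ht hQ'
  exact ⟨Q, hQ.commute hh, hQ.comp_eq, hadj ▸ hQ'.comp_eq, hadj ▸ hQ.commute_of_commute hQ' htn⟩

end InnerProductSpace

namespace Matrix

variable {α l m n : Type*}

theorem submatrix_one_eq_zero [Zero α] [One α] [DecidableEq n] {g : l → n} {f : m → n}
    (hgf : ∀ i j, g i ≠ f j) : (1 : Matrix n n α).submatrix g f = 0 := by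
  ext i j; exact one_apply_ne (hgf i j)

theorem submatrix_eq_of_mul_submatrix_one [Fintype m] [Fintype n] [DecidableEq n]
    [NonAssocSemiring α] {f : m → n} {Q : Matrix n n α} {T : Matrix m m α}
    (hQ : Q * (1 : Matrix n n α).submatrix id f = (1 : Matrix n n α).submatrix id f * T)
    (r : l → n) : Q.submatrix r f = (1 : Matrix n n α).submatrix r f * T := by
  ext i j
  simpa [mul_apply, one_apply] using congrFun (congrFun hQ (r i)) j

theorem submatrix_eq_conjTranspose_mul_mul [Fintype m] [Fintype n] [DecidableEq n]
    [NonAssocSemiring α] [StarRing α] (A : Matrix n n α) (f : m → n) :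
    A.submatrix f f =
      ((1 : Matrix n n α).submatrix id f)ᴴ * A * (1 : Matrix n n α).submatrix id f := by
  ext i j
  simp [mul_apply, one_apply]

theorem commute_toEuclideanLin_compression {𝕜 : Type*} [RCLike 𝕜] [Fintype m] [DecidableEq m]
    [Fintype n] [DecidableEq n] {T : Matrix m m 𝕜} {A : Matrix n n 𝕜} {f : m → n}
    (hT : T * A.submatrix f f = A.submatrix f f * T) :
    Commute (toEuclideanLin T)
      (LinearMap.adjoint (toEuclideanLin ((1 : Matrix n n 𝕜).submatrix id f)) ∘ₗ
        toEuclideanLin A ∘ₗ toEuclideanLin ((1 : Matrix n n 𝕜).submatrix id f)) := by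
  have := congrArg toEuclideanLin hT
  rw [submatrix_eq_conjTranspose_mul_mul] at this
  simp only [toLpLin_mul_same] at this
  rw [toEuclideanLin_conjTranspose_eq_adjoint] at this
  simpa [commute_iff_eq, Module.End.mul_eq_comp, LinearMap.comp_assoc] using this

end Matrix

theorem latent_symmetry_lifts_general {N : ℕ} (S : Finset (Fin N))
    (H : Matrix (Fin N) (Fin N) ℂ) (hH : H.IsHermitian)
    (T : Matrix ↥S ↥S ℂ) (hTnormal : T * Tᴴ = Tᴴ * T)
    (hcomm : ∀ k : ℕ,
      T * (H ^ k).submatrix (fun i : ↥S => (i : Fin N)) (fun i : ↥S => (i : Fin N)) =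
      (H ^ k).submatrix (fun i : ↥S => (i : Fin N)) (fun i : ↥S => (i : Fin N)) * T) :
    ∃ Q : Matrix (Fin N) (Fin N) ℂ,
      Q * Qᴴ = Qᴴ * Q ∧
      Q.submatrix (fun i : ↥S => (i : Fin N)) (fun i : ↥S => (i : Fin N)) = T ∧
      Q.submatrix (fun i : ↥S => (i : Fin N)) (fun i : ↥Sᶜ => (i : Fin N)) = 0 ∧
      Q.submatrix (fun i : ↥Sᶜ => (i : Fin N)) (fun i : ↥S => (i : Fin N)) = 0 ∧
      Q * H = H * Q := by
  set E : Matrix (Fin N) S ℂ := (1 : Matrix (Fin N) (Fin N) ℂ).submatrix id (↑)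
  have ht (k : ℕ) : Commute (toEuclideanLin T)
      (LinearMap.adjoint (toEuclideanLin E) ∘ₗ (toEuclideanLin H ^ k) ∘ₗ toEuclideanLin E) := by
    simpa only [toLpLin_pow] using commute_toEuclideanLin_compression (hcomm k)
  have htn : Commute (toEuclideanLin T) (LinearMap.adjoint (toEuclideanLin T)) := by
    simpa [commute_iff_eq, Module.End.mul_eq_comp, toEuclideanLin_conjTranspose_eq_adjoint] using
      congrArg toEuclideanLin hTnormal
  obtain ⟨q, hqH, hqE, hqE', hqn⟩ :=
    exists_normal_lift ((isSymmetric_toEuclideanLin_iff (A := H)).mpr hH) ht htn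
  obtain ⟨Q, rfl⟩ := toEuclideanLin.surjective q
  have hQE : Q * E = E * T := toEuclideanLin.injective (by simpa using hqE)
  have hQE' : Qᴴ * E = E * Tᴴ :=
    toEuclideanLin.injective (by simpa [toEuclideanLin_conjTranspose_eq_adjoint] using hqE')
  have hdisj : ∀ (i : ↥Sᶜ) (j : ↥S), (i : Fin N) ≠ j := fun i j hij =>
    Finset.mem_compl.mp i.2 (hij ▸ j.2)
  refine ⟨Q, toEuclideanLin.injective ?_, ?_, ?_, ?_, toEuclideanLin.injective ?_⟩
  · simpa [toEuclideanLin_conjTranspose_eq_adjoint, Module.End.mul_eq_comp] using hqn.eq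
  · rw [submatrix_eq_of_mul_submatrix_one hQE, submatrix_one _ Subtype.val_injective, one_mul]
  · rw [← conjTranspose_conjTranspose Q, ← conjTranspose_submatrix,
      submatrix_eq_of_mul_submatrix_one hQE', submatrix_one_eq_zero hdisj, Matrix.zero_mul,
      conjTranspose_zero]
  · rw [submatrix_eq_of_mul_submatrix_one hQE, submatrix_one_eq_zero hdisj, Matrix.zero_mul]
  · simpa [Module.End.mul_eq_comp] using hqH.eq

/-- If a normal invertible matrix `T` commutes with every block `(H^k)_{SS}` of powers of a
Hermitian matrix `H`, then there exists a normal matrix `Q` with `Q_{SS} = T`,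
`Q_{SS̄} = 0`, `Q_{S̄S} = 0`, commuting with `H`. -/
theorem latent_symmetry_lifts {N : ℕ} (S : Finset (Fin N))
    (H : Matrix (Fin N) (Fin N) ℂ) (hH : H.IsHermitian)
    (T : Matrix ↥S ↥S ℂ) (hTnormal : T * Tᴴ = Tᴴ * T) (hTinv : IsUnit T)
    (hcomm : ∀ k : ℕ,
      T * (H ^ k).submatrix (fun i : ↥S => (i : Fin N)) (fun i : ↥S => (i : Fin N)) =
      (H ^ k).submatrix (fun i : ↥S => (i : Fin N)) (fun i : ↥S => (i : Fin N)) * T) :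
    ∃ Q : Matrix (Fin N) (Fin N) ℂ,
      Q * Qᴴ = Qᴴ * Q ∧
      Q.submatrix (fun i : ↥S => (i : Fin N)) (fun i : ↥S => (i : Fin N)) = T ∧
      Q.submatrix (fun i : ↥S => (i : Fin N)) (fun i : ↥Sᶜ => (i : Fin N)) = 0 ∧
      Q.submatrix (fun i : ↥Sᶜ => (i : Fin N)) (fun i : ↥S => (i : Fin N)) = 0 ∧
      Q * H = H * Q :=
  latent_symmetry_lifts_general S H hH T hTnormal hcomm
end

section
/- Let H be an N×N Hermitian complex matrix, S a subset of its index set with complement S̄, and T a normal, invertible |S|×|S| complex matrix. Then T commutes with the isospectral reduction R_S(H,λ) = H_{SS} + H_{SS̄}(λI − H_{S̄S̄})⁻¹ H_{S̄S} for every complex number λ that is not an eigenvalue of H_{S̄S̄} if and only if T commutes with the block ((H^k))_{SS} for every natural number k. -/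
/-!
Split `G = [A B; C D]` along `S ⊕ Sᶜ`. The recursion for the `11`-block of `G ^ (k + 1)` shows
that `T` commutes with every `(G ^ k)₁₁` iff it commutes with `A` and with every `B Dⁱ C`.

For the reduction, let `χ` be the characteristic polynomial of `D`. Cayley–Hamilton gives
`(z - D)⁻¹ = χ(z)⁻¹ q_z(D)` with `q_z = χ /ₘ (X - z) = ∑ zⁱ (divX^[i+1] χ)`, so
`χ(z) [T, R(z)] = ∑ zⁱ (χᵢ [T, A] + [T, B (divX^[i+1] χ)(D) C])` is polynomial in `z`. If it
vanishes off the finite spectrum of `D`, all its coefficients vanish: the top one gives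
`[T, A] = 0`, and the polynomials `divX^[i+1] χ`, monic of each degree below `deg χ`, span all
polynomials of degree `< deg χ`, which suffice by Cayley–Hamilton. The converse is immediate.
-/

open Polynomial Finset

namespace Polynomial

variable {R : Type*} [CommRing R]

theorem coeff_divX_iterate (p : R[X]) (k i : ℕ) : (divX^[k] p).coeff i = p.coeff (i + k) := by
  induction k generalizing i with
  | zero => rfl
  | succ k ih => rw [Function.iterate_succ_apply', coeff_divX, ih, add_right_comm, add_assoc]

theorem divX_iterate_eq_zero {p : R[X]} {k : ℕ} (hk : p.natDegree < k) : divX^[k] p = 0 := by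
  ext i
  rw [coeff_divX_iterate, coeff_zero, coeff_eq_zero_of_natDegree_lt (by omega)]

theorem divByMonic_X_sub_C_eq_sum (p : R[X]) (z : R) :
    p /ₘ (X - C z) = ∑ i ∈ range (p.natDegree + 1), C (z ^ i) * divX^[i + 1] p := by
  nontriviality R
  have telescope : ∀ N, (X - C z) * ∑ i ∈ range N, C (z ^ i) * divX^[i + 1] p =
      p - C (z ^ N) * divX^[N] p - C (∑ i ∈ range N, p.coeff i * z ^ i) := by
    intro N
    induction N with
    | zero => simp
    | succ N ih =>
      have hq := X_mul_divX_add (divX^[N] p)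
      rw [coeff_divX_iterate, zero_add] at hq
      rw [sum_range_succ, mul_add, ih, sum_range_succ, Function.iterate_succ_apply' divX N]
      simp only [map_add, map_mul, map_pow]
      linear_combination (C z ^ N) * hq
  refine (div_modByMonic_unique _ (C (p.eval z)) (monic_X_sub_C z) ⟨?_, ?_⟩).1
  · rw [telescope, divX_iterate_eq_zero (Nat.lt_succ_self _), ← eval_eq_sum_range]
    ring
  · rw [degree_X_sub_C]
    exact degree_C_le.trans_lt zero_lt_one

theorem degreeLT_le_span_divX_iterate {p : R[X]} (hp : p.Monic) :
    degreeLT R p.natDegree ≤ Submodule.span R (Set.range fun k => divX^[k + 1] p) := by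
  suffices ∀ j ≤ p.natDegree, ∀ r : R[X], r.degree < j →
      r ∈ Submodule.span R (Set.range fun k => divX^[k + 1] p) from
    fun r hr => this _ le_rfl r (mem_degreeLT.mp hr)
  intro j
  induction j with
  | zero =>
    intro _ r hr
    obtain rfl : r = 0 := by ext i; exact (degree_lt_iff_coeff_zero r 0).mp hr i i.zero_le
    exact zero_mem _
  | succ j ih =>
    intro hj r hr
    have hmem : divX^[p.natDegree - j] p ∈ Submodule.span R (Set.range fun k => divX^[k + 1] p) :=
      Submodule.subset_span ⟨p.natDegree - j - 1, by
        simp only [Nat.sub_add_cancel (by omega : 1 ≤ p.natDegree - j)]⟩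
    have hlower : (r - r.coeff j • divX^[p.natDegree - j] p).degree < j := by
      rw [degree_lt_iff_coeff_zero] at hr ⊢
      intro i hi
      rw [coeff_sub, coeff_smul, coeff_divX_iterate, smul_eq_mul]
      rcases hi.eq_or_lt with rfl | hi
      · rw [Nat.add_sub_cancel' (by omega), hp.coeff_natDegree, mul_one, sub_self]
      · rw [hr i hi, coeff_eq_zero_of_natDegree_lt (p := p) (by omega), mul_zero, sub_zero]
    simpa using Submodule.add_mem _ (ih (by omega) _ hlower) (Submodule.smul_mem _ (r.coeff j) hmem)

theorem comp_aeval_eq_zero_of_degreeLT_le_ker {S M : Type*} [Ring S] [Algebra R S]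
    [AddCommGroup M] [Module R M] {p : R[X]} (hp : p.Monic) {a : S} (hpa : aeval a p = 0)
    {f : S →ₗ[R] M} (h : degreeLT R p.natDegree ≤ LinearMap.ker (f ∘ₗ (aeval a).toLinearMap)) :
    f ∘ₗ (aeval a).toLinearMap = 0 := by
  nontriviality R
  refine LinearMap.ext fun r => ?_
  rw [LinearMap.comp_apply, AlgHom.toLinearMap_apply, ← aeval_modByMonic_eq_self_of_root hpa]
  exact h (mem_degreeLT.mpr ((degree_modByMonic_lt r hp).trans_eq (degree_eq_natDegree hp.ne_zero)))

variable {K V : Type*} [Field K] [Infinite K] [AddCommGroup V] [Module K V]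

theorem eq_zero_of_forall_notMem_sum_pow_smul_eq_zero {s : Set K} (hs : s.Finite) {N : ℕ}
    {v : ℕ → V} (h : ∀ z ∉ s, ∑ i ∈ range N, z ^ i • v i = 0) : ∀ i < N, v i = 0 := by
  intro i hi
  rw [← Module.forall_dual_apply_eq_zero_iff K]
  intro φ
  have hq : ∑ j ∈ range N, monomial j (φ (v j)) = 0 := by
    refine eq_zero_of_infinite_isRoot _ (hs.infinite_compl.mono fun z hz => ?_)
    simpa [eval_finsetSum, map_sum, mul_comm] using congrArg φ (h z hz)
  simpa [finsetSum_coeff, coeff_monomial, hi] using congrArg (coeff · i) hq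

theorem eq_zero_and_degreeLT_le_ker {p : K[X]} (hp : p.Monic) (ψ : K[X] →ₗ[K] V)
    (κ : V) {s : Set K} (hs : s.Finite) (h : ∀ z ∉ s, p.eval z • κ + ψ (p /ₘ (X - C z)) = 0) :
    κ = 0 ∧ degreeLT K p.natDegree ≤ LinearMap.ker ψ := by
  have hcoeff := eq_zero_of_forall_notMem_sum_pow_smul_eq_zero hs
    (v := fun i => p.coeff i • κ + ψ (divX^[i + 1] p)) fun z hz => by
      have hz := h z hz
      simp only [divByMonic_X_sub_C_eq_sum, ← smul_eq_C_mul, map_sum, map_smul] at hz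
      simpa [eval_eq_sum_range, smul_add, sum_add_distrib, sum_smul, mul_smul,
        smul_comm _ (p.coeff _)] using hz
  have hκ : κ = 0 := by
    simpa [hp.coeff_natDegree, divX_iterate_eq_zero] using hcoeff p.natDegree (by omega)
  refine ⟨hκ, (degreeLT_le_span_divX_iterate hp).trans (Submodule.span_le.mpr ?_)⟩
  rintro _ ⟨k, rfl⟩
  rcases lt_or_ge p.natDegree (k + 1) with hk | hk
  · simp [divX_iterate_eq_zero hk]
  · simpa [hκ] using hcoeff k (by omega)

end Polynomial

namespace Matrix

section Blocks

variable {α : Type*} [NonUnitalNonAssocSemiring α] {l m n o p q : Type*} [Fintype n] [Fintype o]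

theorem toBlocks₁₁_mul (M : Matrix (l ⊕ m) (n ⊕ o) α) (N : Matrix (n ⊕ o) (p ⊕ q) α) :
    (M * N).toBlocks₁₁ = M.toBlocks₁₁ * N.toBlocks₁₁ + M.toBlocks₁₂ * N.toBlocks₂₁ := by
  ext i j
  simp [toBlocks₁₁, toBlocks₁₂, toBlocks₂₁, mul_apply, Fintype.sum_sum_type]

theorem toBlocks₂₁_mul (M : Matrix (l ⊕ m) (n ⊕ o) α) (N : Matrix (n ⊕ o) (p ⊕ q) α) :
    (M * N).toBlocks₂₁ = M.toBlocks₂₁ * N.toBlocks₁₁ + M.toBlocks₂₂ * N.toBlocks₂₁ := by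
  ext i j
  simp [toBlocks₁₁, toBlocks₂₂, toBlocks₂₁, mul_apply, Fintype.sum_sum_type]

theorem toBlocks₁₁_one [DecidableEq l] [DecidableEq m] {β : Type*} [Zero β] [One β] :
    (1 : Matrix (l ⊕ m) (l ⊕ m) β).toBlocks₁₁ = 1 := by
  rw [← fromBlocks_one, toBlocks_fromBlocks₁₁]

end Blocks

section BlockPowers

variable {R : Type*} [Ring R] {m n : Type*} [Fintype m] [Fintype n] [DecidableEq m] [DecidableEq n]
  (G : Matrix (m ⊕ n) (m ⊕ n) R)

theorem toBlocks₂₁_pow (k : ℕ) :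
    (G ^ k).toBlocks₂₁ =
      ∑ j ∈ range k, G.toBlocks₂₂ ^ (k - 1 - j) * G.toBlocks₂₁ * (G ^ j).toBlocks₁₁ := by
  induction k with
  | zero => rfl
  | succ k ih =>
    rw [pow_succ', toBlocks₂₁_mul, ih, Matrix.mul_sum, sum_range_succ, Nat.add_sub_cancel,
      Nat.sub_self, pow_zero, Matrix.one_mul, add_comm]
    congr 1
    refine sum_congr rfl fun j hj => ?_
    rw [← Matrix.mul_assoc, ← Matrix.mul_assoc, ← pow_succ']
    congr 3
    have := mem_range.mp hj
    omega

theorem toBlocks₁₁_pow_succ (k : ℕ) :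
    (G ^ (k + 1)).toBlocks₁₁ = G.toBlocks₁₁ * (G ^ k).toBlocks₁₁ +
      ∑ j ∈ range k,
        G.toBlocks₁₂ * G.toBlocks₂₂ ^ (k - 1 - j) * G.toBlocks₂₁ * (G ^ j).toBlocks₁₁ := by
  simp only [pow_succ' G k, toBlocks₁₁_mul, toBlocks₂₁_pow, Matrix.mul_sum, Matrix.mul_assoc]

theorem forall_commute_toBlocks₁₁_pow_iff (T : Matrix m m R) :
    (∀ k, Commute T (G ^ k).toBlocks₁₁) ↔
      Commute T G.toBlocks₁₁ ∧ ∀ i, Commute T (G.toBlocks₁₂ * G.toBlocks₂₂ ^ i * G.toBlocks₂₁) := by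
  constructor
  · intro hpow
    have hA : Commute T G.toBlocks₁₁ := by simpa using hpow 1
    refine ⟨hA, fun i => ?_⟩
    induction i using Nat.strong_induction_on with
    | _ i ih =>
      have hrec := hpow (i + 2)
      rw [toBlocks₁₁_pow_succ, sum_range_succ', pow_zero, toBlocks₁₁_one, Matrix.mul_one,
        Nat.add_sub_cancel, Nat.sub_zero] at hrec
      have hlower : Commute T (∑ j ∈ range i, G.toBlocks₁₂ * G.toBlocks₂₂ ^ (i - (j + 1)) *
          G.toBlocks₂₁ * (G ^ (j + 1)).toBlocks₁₁) :=
        sum_induction _ _ (fun _ _ => Commute.add_right) (Commute.zero_right T) fun j hj =>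
          (ih _ (by simp at hj; omega)).mul_right (hpow _)
      have h := (hrec.sub_right (hA.mul_right (hpow (i + 1)))).sub_right hlower
      rwa [add_sub_cancel_left, add_sub_cancel_left] at h
  · rintro ⟨hA, hBDC⟩ k
    induction k using Nat.strong_induction_on with
    | _ k ih =>
      rcases k with _ | k
      · simp [toBlocks₁₁_one]
      rw [toBlocks₁₁_pow_succ]
      refine (hA.mul_right (ih k k.lt_succ_self)).add_right
        (sum_induction _ _ (fun _ _ => Commute.add_right) (Commute.zero_right T) fun j hj => ?_)
      exact (hBDC _).mul_right (ih j (by simp at hj; omega))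

end BlockPowers

section IsospectralReduction

variable {K : Type*} [Field K] {m n : Type*} [Fintype n] [DecidableEq n]

theorem inv_smul_one_sub_eq_smul_aeval (D : Matrix n n K) {z : K} (hz : z ∉ spectrum K D) :
    (z • (1 : Matrix n n K) - D)⁻¹ =
      (D.charpoly.eval z)⁻¹ • aeval D (D.charpoly /ₘ (X - C z)) := by
  have hχ : D.charpoly.eval z ≠ 0 := by rwa [mem_spectrum_iff_isRoot_charpoly] at hz
  have hdiv := congrArg (aeval D) (modByMonic_add_div D.charpoly (X - C z))
  rw [modByMonic_X_sub_C_eq_C_eval, map_add, map_mul, aeval_C, map_sub, aeval_X, aeval_C,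
    aeval_self_charpoly, Algebra.algebraMap_eq_smul_one, Algebra.algebraMap_eq_smul_one,
    ← eq_neg_iff_add_eq_zero, ← neg_mul, neg_sub] at hdiv
  refine inv_eq_right_inv ?_
  rw [Matrix.mul_smul, ← hdiv, smul_smul, inv_mul_cancel₀ hχ, one_smul]

noncomputable def isospectralReduction (G : Matrix (m ⊕ n) (m ⊕ n) K) (z : K) : Matrix m m K :=
  G.toBlocks₁₁ + G.toBlocks₁₂ * (z • (1 : Matrix n n K) - G.toBlocks₂₂)⁻¹ * G.toBlocks₂₁

theorem isospectralReduction_eq_add_smul_aeval (G : Matrix (m ⊕ n) (m ⊕ n) K) {z : K}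
    (hz : z ∉ spectrum K G.toBlocks₂₂) :
    G.isospectralReduction z = G.toBlocks₁₁ + (G.toBlocks₂₂.charpoly.eval z)⁻¹ •
      (G.toBlocks₁₂ * aeval G.toBlocks₂₂ (G.toBlocks₂₂.charpoly /ₘ (X - C z)) * G.toBlocks₂₁) := by
  rw [isospectralReduction, inv_smul_one_sub_eq_smul_aeval _ hz, Matrix.mul_smul, Matrix.smul_mul]

theorem forall_commute_isospectralReduction_iff [Infinite K] [Fintype m] [DecidableEq m]
    (G : Matrix (m ⊕ n) (m ⊕ n) K) (T : Matrix m m K) :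
    (∀ z ∉ spectrum K G.toBlocks₂₂, Commute T (G.isospectralReduction z)) ↔
      Commute T G.toBlocks₁₁ ∧ ∀ i, Commute T (G.toBlocks₁₂ * G.toBlocks₂₂ ^ i * G.toBlocks₂₁) := by
  let ad : Matrix m m K →ₗ[K] Matrix m m K := LinearMap.mulLeft K T - LinearMap.mulRight K T
  have hcommute : ∀ M, Commute T M ↔ ad M = 0 := fun M => sub_eq_zero.symm
  let sandwich : Matrix n n K →ₗ[K] Matrix m m K :=
    mulRightLinearMap m K G.toBlocks₂₁ ∘ₗ mulLeftLinearMap n K G.toBlocks₁₂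
  let ψ : K[X] →ₗ[K] Matrix m m K := (ad ∘ₗ sandwich) ∘ₗ (aeval G.toBlocks₂₂).toLinearMap
  have hψ : (∀ i, Commute T (G.toBlocks₁₂ * G.toBlocks₂₂ ^ i * G.toBlocks₂₁)) ↔ ψ = 0 := by
    constructor
    · intro h
      refine lhom_ext' fun i => LinearMap.ext_ring ?_
      simpa [ψ, sandwich, ← hcommute] using h i
    · intro h i
      simpa [ψ, sandwich, ← hcommute] using LinearMap.congr_fun h (X ^ i)
  have hreduction : ∀ z ∉ spectrum K G.toBlocks₂₂, ad (G.isospectralReduction z) =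
      ad G.toBlocks₁₁ + (G.toBlocks₂₂.charpoly.eval z)⁻¹ •
        ψ (G.toBlocks₂₂.charpoly /ₘ (X - C z)) := fun z hz => by
    rw [isospectralReduction_eq_add_smul_aeval G hz, map_add, map_smul]
    rfl
  rw [hψ, hcommute]
  constructor
  · intro h
    obtain ⟨hκ, hker⟩ := eq_zero_and_degreeLT_le_ker (charpoly_monic G.toBlocks₂₂) ψ
      (ad G.toBlocks₁₁) (finite_spectrum G.toBlocks₂₂) fun z hz => by
        have hχ : G.toBlocks₂₂.charpoly.eval z ≠ 0 := by
          rwa [mem_spectrum_iff_isRoot_charpoly] at hz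
        rw [← smul_eq_zero_iff_right (inv_ne_zero hχ), smul_add, inv_smul_smul₀ hχ,
          ← hreduction z hz, ← hcommute]
        exact h z hz
    exact ⟨hκ, comp_aeval_eq_zero_of_degreeLT_le_ker (f := ad ∘ₗ sandwich)
      (charpoly_monic G.toBlocks₂₂) (aeval_self_charpoly G.toBlocks₂₂) hker⟩
  · rintro ⟨hA, hψ0⟩ z hz
    rw [hcommute, hreduction z hz, hA, hψ0]
    simp

end IsospectralReduction

end Matrix

open Matrix

theorem isospectral_reduction_commute_iff_blocks_commute_general {N : ℕ} (S : Finset (Fin N))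
    (H : Matrix (Fin N) (Fin N) ℂ)
    (T : Matrix ↥S ↥S ℂ) :
    (∀ z : ℂ, z ∉ spectrum ℂ
        (H.submatrix (fun i : ↥Sᶜ => (i : Fin N)) (fun i : ↥Sᶜ => (i : Fin N))) →
      T * (H.submatrix (fun i : ↥S => (i : Fin N)) (fun i : ↥S => (i : Fin N)) +
        H.submatrix (fun i : ↥S => (i : Fin N)) (fun i : ↥Sᶜ => (i : Fin N)) *
          (z • (1 : Matrix ↥Sᶜ ↥Sᶜ ℂ) -
            H.submatrix (fun i : ↥Sᶜ => (i : Fin N)) (fun i : ↥Sᶜ => (i : Fin N)))⁻¹ *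
          H.submatrix (fun i : ↥Sᶜ => (i : Fin N)) (fun i : ↥S => (i : Fin N))) =
      (H.submatrix (fun i : ↥S => (i : Fin N)) (fun i : ↥S => (i : Fin N)) +
        H.submatrix (fun i : ↥S => (i : Fin N)) (fun i : ↥Sᶜ => (i : Fin N)) *
          (z • (1 : Matrix ↥Sᶜ ↥Sᶜ ℂ) -
            H.submatrix (fun i : ↥Sᶜ => (i : Fin N)) (fun i : ↥Sᶜ => (i : Fin N)))⁻¹ *
          H.submatrix (fun i : ↥Sᶜ => (i : Fin N)) (fun i : ↥S => (i : Fin N))) * T)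
    ↔
    (∀ k : ℕ,
      T * (H ^ k).submatrix (fun i : ↥S => (i : Fin N)) (fun i : ↥S => (i : Fin N)) =
      (H ^ k).submatrix (fun i : ↥S => (i : Fin N)) (fun i : ↥S => (i : Fin N)) * T) := by
  let e : ↥S ⊕ ↥Sᶜ ≃ Fin N :=
    (Equiv.sumCongr (Equiv.refl _) (Equiv.subtypeEquivRight fun _ => Finset.mem_compl)).trans
      (Equiv.sumCompl (· ∈ S))
  have hpow : ∀ k, (H.submatrix e e ^ k).toBlocks₁₁ =
      (H ^ k).submatrix (fun i : ↥S => (i : Fin N)) (fun i : ↥S => (i : Fin N)) := fun k =>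
    congrArg toBlocks₁₁ (map_pow (reindexAlgEquiv ℂ ℂ e.symm) H k).symm
  have key := (forall_commute_isospectralReduction_iff (H.submatrix e e) T).trans
    (forall_commute_toBlocks₁₁_pow_iff (H.submatrix e e) T).symm
  simp only [hpow] at key
  exact key

/-- `T` commutes with the isospectral reduction
`R_S(H,λ) = H_{SS} + H_{SS̄} (λI - H_{S̄S̄})⁻¹ H_{S̄S}` for every `λ` outside the spectrum of
`H_{S̄S̄}` if and only if `T` commutes with `(H^k)_{SS}` for every natural number `k`. -/
theorem isospectral_reduction_commute_iff_blocks_commute {N : ℕ} (S : Finset (Fin N))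
    (H : Matrix (Fin N) (Fin N) ℂ) (hH : H.IsHermitian)
    (T : Matrix ↥S ↥S ℂ) (hTnormal : T * Tᴴ = Tᴴ * T) (hTinv : IsUnit T) :
    (∀ z : ℂ, z ∉ spectrum ℂ
        (H.submatrix (fun i : ↥Sᶜ => (i : Fin N)) (fun i : ↥Sᶜ => (i : Fin N))) →
      T * (H.submatrix (fun i : ↥S => (i : Fin N)) (fun i : ↥S => (i : Fin N)) +
        H.submatrix (fun i : ↥S => (i : Fin N)) (fun i : ↥Sᶜ => (i : Fin N)) *
          (z • (1 : Matrix ↥Sᶜ ↥Sᶜ ℂ) -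
            H.submatrix (fun i : ↥Sᶜ => (i : Fin N)) (fun i : ↥Sᶜ => (i : Fin N)))⁻¹ *
          H.submatrix (fun i : ↥Sᶜ => (i : Fin N)) (fun i : ↥S => (i : Fin N))) =
      (H.submatrix (fun i : ↥S => (i : Fin N)) (fun i : ↥S => (i : Fin N)) +
        H.submatrix (fun i : ↥S => (i : Fin N)) (fun i : ↥Sᶜ => (i : Fin N)) *
          (z • (1 : Matrix ↥Sᶜ ↥Sᶜ ℂ) -
            H.submatrix (fun i : ↥Sᶜ => (i : Fin N)) (fun i : ↥Sᶜ => (i : Fin N)))⁻¹ *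
          H.submatrix (fun i : ↥Sᶜ => (i : Fin N)) (fun i : ↥S => (i : Fin N))) * T)
    ↔
    (∀ k : ℕ,
      T * (H ^ k).submatrix (fun i : ↥S => (i : Fin N)) (fun i : ↥S => (i : Fin N)) =
      (H ^ k).submatrix (fun i : ↥S => (i : Fin N)) (fun i : ↥S => (i : Fin N)) * T) :=
  isospectral_reduction_commute_iff_blocks_commute_general S H T
end

section
/- Let H be an N×N complex matrix, S a subset of its index set with complement S̄, and suppose H x = λ x with x ≠ 0 and λI − H_{S̄S̄} invertible. Then x_S ≠ 0 and x_S satisfies the reduced eigenvalue equation R_S(H,λ) x_S = λ x_S, where R_S(H,λ) = H_{SS} + H_{SS̄}(λI − H_{S̄S̄})⁻¹ H_{S̄S} is the isospectral reduction of H over S at λ. -/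
open Matrix

/-- If `H x = λ x` with `x ≠ 0` and `λI - H_{S̄S̄}` invertible, then the restriction `x_S`
is nonzero and satisfies the reduced eigenvalue equation `R_S(H,λ) x_S = λ x_S`. -/
theorem isospectral_reduction_eigvec {N : ℕ} (S : Finset (Fin N))
    (H : Matrix (Fin N) (Fin N) ℂ)
    (x : Fin N → ℂ) (lam : ℂ) (hx : x ≠ 0) (heig : H.mulVec x = lam • x)
    (hunit : IsUnit (lam • (1 : Matrix ↥Sᶜ ↥Sᶜ ℂ) -
      H.submatrix (fun i : ↥Sᶜ => (i : Fin N)) (fun i : ↥Sᶜ => (i : Fin N)))) :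
    (fun i : ↥S => x i) ≠ 0 ∧
    (H.submatrix (fun i : ↥S => (i : Fin N)) (fun i : ↥S => (i : Fin N)) +
      H.submatrix (fun i : ↥S => (i : Fin N)) (fun i : ↥Sᶜ => (i : Fin N)) *
        (lam • (1 : Matrix ↥Sᶜ ↥Sᶜ ℂ) -
          H.submatrix (fun i : ↥Sᶜ => (i : Fin N)) (fun i : ↥Sᶜ => (i : Fin N)))⁻¹ *
        H.submatrix (fun i : ↥Sᶜ => (i : Fin N)) (fun i : ↥S => (i : Fin N))).mulVec
      (fun i : ↥S => x i) = lam • fun i : ↥S => x i := by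
  classical
  set A := H.submatrix (fun i : ↥S => (i : Fin N)) (fun i : ↥S => (i : Fin N)) with hA
  set B := H.submatrix (fun i : ↥S => (i : Fin N)) (fun i : ↥Sᶜ => (i : Fin N)) with hB
  set C := H.submatrix (fun i : ↥Sᶜ => (i : Fin N)) (fun i : ↥S => (i : Fin N)) with hC
  set D := H.submatrix (fun i : ↥Sᶜ => (i : Fin N)) (fun i : ↥Sᶜ => (i : Fin N)) with hD
  set M := lam • (1 : Matrix ↥Sᶜ ↥Sᶜ ℂ) - D with hM
  set xS : ↥S → ℂ := fun i => x i with hxS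
  set xC : ↥Sᶜ → ℂ := fun i => x i with hxCdef
  have hsplit : ∀ i : Fin N,
      (∑ j : ↥S, H i j * x j) + (∑ j : ↥Sᶜ, H i j * x j) = lam * x i := by
    intro i
    have h1 : (∑ j : ↥S, H i (j : Fin N) * x j) = ∑ j ∈ S, H i j * x j :=
      Finset.sum_coe_sort S (fun j => H i j * x j)
    have h2 : (∑ j : ↥Sᶜ, H i (j : Fin N) * x j) = ∑ j ∈ Sᶜ, H i j * x j :=
      Finset.sum_coe_sort Sᶜ (fun j => H i j * x j)
    have h3 := congrFun heig i
    simp only [Matrix.mulVec, dotProduct, Pi.smul_apply, smul_eq_mul] at h3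
    rw [h1, h2, Finset.sum_add_sum_compl]
    exact h3
  have claim1 : A.mulVec xS + B.mulVec xC = lam • xS := by
    funext i
    simpa [Matrix.mulVec, dotProduct, hA, hB, hxS, hxCdef] using hsplit (i : Fin N)
  have claim2 : C.mulVec xS + D.mulVec xC = lam • xC := by
    funext i
    simpa [Matrix.mulVec, dotProduct, hC, hD, hxS, hxCdef] using hsplit (i : Fin N)
  have hMxC : M.mulVec xC = C.mulVec xS := by
    rw [hM, Matrix.sub_mulVec, Matrix.smul_mulVec, Matrix.one_mulVec, ← claim2]
    abel
  have hdet : IsUnit M.det := (Matrix.isUnit_iff_isUnit_det M).mp hunit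
  have hinv : M⁻¹ * M = 1 := Matrix.nonsing_inv_mul M hdet
  have hxC : xC = M⁻¹.mulVec (C.mulVec xS) := by
    rw [← hMxC, Matrix.mulVec_mulVec, hinv, Matrix.one_mulVec]
  constructor
  · intro h0
    apply hx
    have hxC0 : xC = 0 := by
      rw [hxC, h0, Matrix.mulVec_zero, Matrix.mulVec_zero]
    funext i
    by_cases hi : i ∈ S
    · exact congrFun h0 (⟨i, hi⟩ : ↥S)
    · exact congrFun hxC0 (⟨i, Finset.mem_compl.mpr hi⟩ : ↥Sᶜ)
  · calc (A + B * M⁻¹ * C).mulVec xS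
        = A.mulVec xS + B.mulVec (M⁻¹.mulVec (C.mulVec xS)) := by
          rw [Matrix.add_mulVec, ← Matrix.mulVec_mulVec, ← Matrix.mulVec_mulVec]
      _ = A.mulVec xS + B.mulVec xC := by rw [← hxC]
      _ = lam • xS := claim1
end
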